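/- arXiv:math/0108077 — 2 statements merged into one kernel-verified Lean document; each statement's English description precedes it below -/
import Mathlib

section
/- Let β > 0 and let ν₀ = lim_{n→∞} (1/n) ln |Γ_n|. Then for every B > B* := (ln 4 − ν₀)/β > 0 and every integer n ≥ 0, E_0[e^{−βJ_n} · 1{J_n > Bn}] < E_0[e^{−βJ_n} · 1{J_n = 0}]; in particular, E_0[e^{−βJ_n} · 1{J_n > Bn}] = o(E_0[e^{−βJ_n} · 1{J_n = 0}]) as n → ∞. -/
open Filter Real Finset

noncomputable section

/-- The four unit steps of the planar nearest-neighbour walk. -/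
def dir : Fin 4 → ℤ × ℤ
  | 0 => (1, 0)
  | 1 => (-1, 0)
  | 2 => (0, 1)
  | 3 => (0, -1)

/-- Position after `k` steps of the walk encoded by the step sequence `ω`. -/
def pos (n : ℕ) (ω : Fin n → Fin 4) (k : ℕ) : ℤ × ℤ :=
  ∑ i : Fin n, if (i : ℕ) < k then dir (ω i) else 0

/-- Number of self-intersections `J_n = Σ_{0 ≤ i < j ≤ n} 1{S_i = S_j}`. -/
def J (n : ℕ) (ω : Fin n → Fin 4) : ℕ :=
  ((Finset.range (n + 1) ×ˢ Finset.range (n + 1)).filter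
    (fun p => p.1 < p.2 ∧ pos n ω p.1 = pos n ω p.2)).card

/-- Euclidean distance `χ_n = |S_n|` of the endpoint from the origin. -/
def chi (n : ℕ) (ω : Fin n → Fin 4) : ℝ :=
  Real.sqrt (((pos n ω n).1 : ℝ) ^ 2 + ((pos n ω n).2 : ℝ) ^ 2)

/-- Expectation under the uniform measure `P_0` on the `4^n` paths of length `n`. -/
def E0 (n : ℕ) (f : (Fin n → Fin 4) → ℝ) : ℝ :=
  (∑ ω : Fin n → Fin 4, f ω) / 4 ^ n

/-- Expectation `E_β` under the weakly self-avoiding walk measure `Q_n^β`. -/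
def Ewsaw (β : ℝ) (n : ℕ) (f : (Fin n → Fin 4) → ℝ) : ℝ :=
  E0 n (fun ω => f ω * Real.exp (-β * J n ω)) /
    E0 n (fun ω => Real.exp (-β * J n ω))

/-- The set `Γ_n` of self-avoiding paths of length `n`. -/
def SAW (n : ℕ) : Finset (Fin n → Fin 4) :=
  Finset.univ.filter (fun ω => J n ω = 0)

/-- Expectation with respect to the uniform distribution on `Γ_n`. -/
def Esaw (n : ℕ) (f : (Fin n → Fin 4) → ℝ) : ℝ :=
  (∑ ω ∈ SAW n, f ω) / (SAW n).card

lemma J_eq_zero_iff (n : ℕ) (ω : Fin n → Fin 4) :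
    J n ω = 0 ↔ ∀ i j : ℕ, i ≤ n → j ≤ n → i < j → pos n ω i ≠ pos n ω j := by
  unfold J
  rw [Finset.card_eq_zero, Finset.filter_eq_empty_iff]
  constructor
  · intro h i j hi hj hij heq
    exact h (x := (i, j))
      (by simp [Finset.mem_product, Nat.lt_succ_iff, hi, hj]) ⟨hij, heq⟩
  · intro h p hp
    simp only [Finset.mem_product, Finset.mem_range, Nat.lt_succ_iff] at hp
    rintro ⟨hlt, heq⟩
    exact h _ _ hp.1 hp.2 hlt heq

lemma pos_prefix (m n : ℕ) (ω : Fin (m + n) → Fin 4) (k : ℕ) (hk : k ≤ m) :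
    pos (m + n) ω k = pos m (fun i => ω (Fin.castAdd n i)) k := by
  unfold pos
  rw [Fin.sum_univ_add]
  have h2 : ∀ i : Fin n,
      (if ((Fin.natAdd m i : Fin (m + n)) : ℕ) < k then dir (ω (Fin.natAdd m i)) else 0) = 0 := by
    intro i
    rw [if_neg]
    simp only [Fin.coe_natAdd]
    omega
  simp only [h2, Finset.sum_const_zero, add_zero, Fin.coe_castAdd]

lemma pos_suffix (m n : ℕ) (ω : Fin (m + n) → Fin 4) (k : ℕ) :
    pos (m + n) ω (m + k) = pos (m + n) ω m + pos n (fun i => ω (Fin.natAdd m i)) k := by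
  unfold pos
  rw [Fin.sum_univ_add, Fin.sum_univ_add]
  have h1 : ∀ i : Fin m,
      (if ((Fin.castAdd n i : Fin (m + n)) : ℕ) < m + k then dir (ω (Fin.castAdd n i)) else 0)
        = dir (ω (Fin.castAdd n i)) := by
    intro i; rw [if_pos]; simp only [Fin.coe_castAdd]; omega
  have h2 : ∀ i : Fin m,
      (if ((Fin.castAdd n i : Fin (m + n)) : ℕ) < m then dir (ω (Fin.castAdd n i)) else 0)
        = dir (ω (Fin.castAdd n i)) := by
    intro i; rw [if_pos]; simp only [Fin.coe_castAdd]; exact i.2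
  have h3 : ∀ i : Fin n,
      (if ((Fin.natAdd m i : Fin (m + n)) : ℕ) < m then dir (ω (Fin.natAdd m i)) else 0) = 0 := by
    intro i; rw [if_neg]; simp only [Fin.coe_natAdd]; omega
  have h4 : ∀ i : Fin n,
      (if ((Fin.natAdd m i : Fin (m + n)) : ℕ) < m + k then dir (ω (Fin.natAdd m i)) else 0)
        = (if (i : ℕ) < k then dir (ω (Fin.natAdd m i)) else 0) := by
    intro i; simp only [Fin.coe_natAdd]
    by_cases h : (i : ℕ) < k
    · rw [if_pos (by omega), if_pos h]
    · rw [if_neg (by omega), if_neg h]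
  simp only [h1, h2, h3, h4, Finset.sum_const_zero, add_zero]

lemma SAW_card_subadd (m n : ℕ) :
    (SAW (m + n)).card ≤ (SAW m).card * (SAW n).card := by
  rw [← Finset.card_product]
  apply Finset.card_le_card_of_injOn
    (fun ω => (fun i => ω (Fin.castAdd n i), fun i => ω (Fin.natAdd m i)))
  · intro ω hω
    simp only [SAW, Finset.mem_coe, Finset.coe_filter, Set.mem_setOf_eq, Finset.mem_filter, Finset.mem_univ, true_and] at hω
    rw [J_eq_zero_iff] at hω
    rw [Finset.mem_coe, Finset.mem_product]
    constructor
    · simp only [SAW, Finset.mem_filter, Finset.mem_univ, true_and]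
      rw [J_eq_zero_iff]
      intro i j hi hj hij heq
      rw [← pos_prefix m n ω i hi, ← pos_prefix m n ω j hj] at heq
      exact hω i j (by omega) (by omega) hij heq
    · simp only [SAW, Finset.mem_filter, Finset.mem_univ, true_and]
      rw [J_eq_zero_iff]
      intro i j hi hj hij heq
      have : pos (m + n) ω (m + i) = pos (m + n) ω (m + j) := by
        rw [pos_suffix, pos_suffix, heq]
      exact hω (m + i) (m + j) (by omega) (by omega) (by omega) this
  · intro ω _ ω' _ h
    have h1 := congrArg Prod.fst h
    have h2 := congrArg Prod.snd h
    simp only at h1 h2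
    funext i
    rcases lt_or_ge (i : ℕ) m with hi | hi
    · have := congrFun h1 ⟨i, hi⟩
      have e : Fin.castAdd n (⟨(i : ℕ), hi⟩ : Fin m) = i := by
        apply Fin.ext; simp
      rwa [e] at this
    · have hin : (i : ℕ) - m < n := by omega
      have := congrFun h2 ⟨(i : ℕ) - m, hin⟩
      have e : Fin.natAdd m (⟨(i : ℕ) - m, hin⟩ : Fin n) = i := by
        apply Fin.ext; simp; omega
      rwa [e] at this

lemma pos_fst_const (n k : ℕ) (hk : k ≤ n) :
    (pos n (fun _ => (0 : Fin 4)) k).1 = (k : ℤ) := by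
  unfold pos
  rw [Prod.fst_sum]
  have : ∀ i : Fin n, ((if (i : ℕ) < k then dir 0 else 0) : ℤ × ℤ).1
      = (if (i : ℕ) < k then (1 : ℤ) else 0) := by
    intro i; by_cases h : (i : ℕ) < k <;> simp [h, dir]
  rw [Finset.sum_congr rfl (fun i _ => this i),
    Fin.sum_univ_eq_sum_range (fun i => if i < k then (1 : ℤ) else 0)]
  rw [← Finset.sum_subset (Finset.range_subset_range.2 hk)
    (by intro x hx hx'; simp only [Finset.mem_range] at hx hx'; rw [if_neg (by omega)])]
  rw [Finset.sum_ite_of_true (by intro x hx; simpa using hx)]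
  simp

lemma SAW_nonempty (n : ℕ) : 0 < (SAW n).card := by
  rw [Finset.card_pos]
  refine ⟨fun _ => 0, ?_⟩
  simp only [SAW, Finset.mem_filter, Finset.mem_univ, true_and]
  rw [J_eq_zero_iff]
  intro i j hi hj hij heq
  have := congrArg Prod.fst heq
  rw [pos_fst_const n i hi, pos_fst_const n j hj] at this
  omega

lemma SAW_two_lt : (SAW 2).card < 16 := by
  have hss : SAW 2 ⊂ Finset.univ := by
    rw [Finset.ssubset_univ_iff]
    intro h
    have : (![0, 1] : Fin 2 → Fin 4) ∈ SAW 2 := h ▸ Finset.mem_univ _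
    simp only [SAW, Finset.mem_filter, Finset.mem_univ, true_and] at this
    rw [J_eq_zero_iff] at this
    apply this 0 2 (by omega) (by omega) (by omega)
    decide
  have := Finset.card_lt_card hss
  simpa using this

lemma sum_indZero (β : ℝ) (n : ℕ) :
    (∑ ω : Fin n → Fin 4, Real.exp (-β * J n ω) * (if J n ω = 0 then 1 else 0))
      = ((SAW n).card : ℝ) := by
  have h : ∀ ω : Fin n → Fin 4,
      Real.exp (-β * J n ω) * (if J n ω = 0 then 1 else 0)
        = (if J n ω = 0 then (1 : ℝ) else 0) := by
    intro ω
    by_cases h : J n ω = 0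
    · simp [h]
    · simp [h]
  rw [Finset.sum_congr rfl (fun ω _ => h ω), Finset.sum_boole]
  rfl

lemma sum_indB_le (β : ℝ) (hβ : 0 < β) (B : ℝ) (n : ℕ) :
    (∑ ω : Fin n → Fin 4, Real.exp (-β * J n ω) * (if B * n < (J n ω : ℝ) then 1 else 0))
      ≤ (4 : ℝ) ^ n * Real.exp (-(β * (B * n))) := by
  have h : ∀ ω : Fin n → Fin 4,
      Real.exp (-β * J n ω) * (if B * n < (J n ω : ℝ) then 1 else 0)
        ≤ Real.exp (-(β * (B * n))) := by
    intro ω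
    by_cases h : B * n < (J n ω : ℝ)
    · rw [if_pos h, mul_one]
      apply Real.exp_le_exp.2
      nlinarith
    · rw [if_neg h, mul_zero]
      positivity
  calc (∑ ω : Fin n → Fin 4, Real.exp (-β * J n ω) * (if B * n < (J n ω : ℝ) then 1 else 0))
      ≤ ∑ _ω : Fin n → Fin 4, Real.exp (-(β * (B * n))) :=
        Finset.sum_le_sum (fun ω _ => h ω)
    _ = (4 : ℝ) ^ n * Real.exp (-(β * (B * n))) := by
        rw [Finset.sum_const, Finset.card_univ, Fintype.card_fun]
        simp [nsmul_eq_mul]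

lemma sum_indB_nonneg (β B : ℝ) (n : ℕ) :
    0 ≤ ∑ ω : Fin n → Fin 4, Real.exp (-β * J n ω) * (if B * n < (J n ω : ℝ) then 1 else 0) := by
  apply Finset.sum_nonneg
  intro ω _
  by_cases h : B * n < (J n ω : ℝ) <;> simp [h, Real.exp_nonneg]


/-- Let `β > 0` and `ν₀ = lim (1/n) ln |Γ_n|`. Then `B* = (ln 4 − ν₀)/β > 0`
and for every `B > B*` and every `n ≥ 0`,
`E_0[e^{−βJ_n} 1{J_n > Bn}] < E_0[e^{−βJ_n} 1{J_n = 0}]`; in particular the left-hand side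
is `o` of the right-hand side as `n → ∞`. -/
theorem statement4 (β : ℝ) (hβ : 0 < β) (ν₀ : ℝ)
    (hν : Filter.Tendsto (fun n : ℕ => Real.log ((SAW n).card : ℝ) / (n : ℝ))
      Filter.atTop (nhds ν₀)) :
    0 < (Real.log 4 - ν₀) / β ∧
    ∀ B : ℝ, (Real.log 4 - ν₀) / β < B →
      (∀ n : ℕ,
        E0 n (fun ω => Real.exp (-β * J n ω) * (if B * n < (J n ω : ℝ) then 1 else 0)) <
          E0 n (fun ω => Real.exp (-β * J n ω) * (if J n ω = 0 then 1 else 0))) ∧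
      (fun n : ℕ =>
          E0 n (fun ω => Real.exp (-β * J n ω) * (if B * n < (J n ω : ℝ) then 1 else 0)))
        =o[Filter.atTop]
      (fun n : ℕ =>
          E0 n (fun ω => Real.exp (-β * J n ω) * (if J n ω = 0 then 1 else 0))) := by
  set u : ℕ → ℝ := fun n => Real.log ((SAW n).card : ℝ) with hu
  have hcard1 : ∀ n, (1 : ℝ) ≤ ((SAW n).card : ℝ) := by
    intro n; exact_mod_cast SAW_nonempty n
  have hcardpos : ∀ n, (0 : ℝ) < ((SAW n).card : ℝ) := fun n => lt_of_lt_of_le one_pos (hcard1 n)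
  have hsub : Subadditive u := by
    intro m n
    have h1 : ((SAW (m + n)).card : ℝ) ≤ ((SAW m).card : ℝ) * ((SAW n).card : ℝ) := by
      exact_mod_cast SAW_card_subadd m n
    calc u (m + n) ≤ Real.log (((SAW m).card : ℝ) * ((SAW n).card : ℝ)) :=
          Real.log_le_log (hcardpos _) h1
      _ = u m + u n := Real.log_mul (ne_of_gt (hcardpos m)) (ne_of_gt (hcardpos n))
  have hunn : ∀ n, 0 ≤ u n := fun n => Real.log_nonneg (hcard1 n)
  have hbdd : BddBelow (Set.range fun n : ℕ => u n / n) := by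
    refine ⟨0, ?_⟩
    rintro x ⟨n, rfl⟩
    exact div_nonneg (hunn n) (Nat.cast_nonneg n)
  have hlim : hsub.lim = ν₀ :=
    tendsto_nhds_unique (hsub.tendsto_lim hbdd) hν
  have hge : ∀ n : ℕ, n ≠ 0 → (n : ℝ) * ν₀ ≤ u n := by
    intro n hn
    have := hsub.lim_le_div hbdd hn
    rw [hlim] at this
    rw [le_div_iff₀ (by exact_mod_cast Nat.pos_of_ne_zero hn)] at this
    linarith
  have hν4 : ν₀ < Real.log 4 := by
    have h2 := hsub.lim_le_div hbdd (two_ne_zero)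
    rw [hlim] at h2
    have hle : u 2 ≤ Real.log 15 := by
      apply Real.log_le_log (hcardpos 2)
      have h15 : (SAW 2).card ≤ 15 := Nat.lt_succ_iff.mp SAW_two_lt
      exact_mod_cast h15
    have h15 : Real.log 15 < 2 * Real.log 4 := by
      rw [show (2 : ℝ) * Real.log 4 = Real.log (4 ^ 2) by rw [Real.log_pow]; push_cast; ring]
      exact Real.log_lt_log (by norm_num) (by norm_num)
    have hd : u 2 / 2 < Real.log 4 := by
      rw [div_lt_iff₀ (by norm_num)]
      calc u 2 ≤ Real.log 15 := hle
        _ < 2 * Real.log 4 := h15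
        _ = Real.log 4 * 2 := by ring
    calc ν₀ ≤ u 2 / (2 : ℕ) := h2
      _ < Real.log 4 := by push_cast at hd ⊢; exact hd
  refine ⟨div_pos (by linarith) hβ, ?_⟩
  intro B hB
  have hβB : Real.log 4 - ν₀ < β * B := by
    rw [div_lt_iff₀ hβ] at hB; linarith
  have h4exp : ∀ n : ℕ, (4 : ℝ) ^ n = Real.exp ((n : ℝ) * Real.log 4) := by
    intro n
    rw [← Real.log_pow, Real.exp_log (by positivity)]
  have hkey : ∀ n : ℕ, n ≠ 0 →
      (4 : ℝ) ^ n * Real.exp (-(β * (B * n))) < ((SAW n).card : ℝ) := by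
    intro n hn
    rw [h4exp, ← Real.exp_add]
    calc Real.exp ((n : ℝ) * Real.log 4 + -(β * (B * n)))
        < Real.exp ((n : ℝ) * ν₀) := by
          apply Real.exp_lt_exp.2
          have hn1 : (1 : ℝ) ≤ (n : ℝ) := by exact_mod_cast Nat.one_le_iff_ne_zero.2 hn
          nlinarith
      _ ≤ ((SAW n).card : ℝ) := by
          rw [← Real.exp_log (hcardpos n)]
          exact Real.exp_le_exp.2 (hge n hn)
  have hRHS : ∀ n : ℕ,
      E0 n (fun ω => Real.exp (-β * J n ω) * (if J n ω = 0 then 1 else 0))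
        = ((SAW n).card : ℝ) / 4 ^ n := by
    intro n; unfold E0; rw [sum_indZero]
  have hRHSpos : ∀ n : ℕ,
      0 < E0 n (fun ω => Real.exp (-β * J n ω) * (if J n ω = 0 then 1 else 0)) := by
    intro n; rw [hRHS]; exact div_pos (hcardpos n) (by positivity)
  have hLHSnonneg : ∀ n : ℕ,
      0 ≤ E0 n (fun ω => Real.exp (-β * J n ω) * (if B * n < (J n ω : ℝ) then 1 else 0)) := by
    intro n; unfold E0
    exact div_nonneg (sum_indB_nonneg β B n) (by positivity)
  have hLHSle : ∀ n : ℕ,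
      E0 n (fun ω => Real.exp (-β * J n ω) * (if B * n < (J n ω : ℝ) then 1 else 0))
        ≤ (4 : ℝ) ^ n * Real.exp (-(β * (B * n))) / 4 ^ n := by
    intro n; unfold E0
    exact div_le_div_of_nonneg_right (sum_indB_le β hβ B n) (by positivity)
  have hmain : ∀ n : ℕ,
      E0 n (fun ω => Real.exp (-β * J n ω) * (if B * n < (J n ω : ℝ) then 1 else 0)) <
        E0 n (fun ω => Real.exp (-β * J n ω) * (if J n ω = 0 then 1 else 0)) := by
    intro n
    rcases eq_or_ne n 0 with rfl | hn
    · have hJ0 : ∀ ω : Fin 0 → Fin 4, J 0 ω = 0 := by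
        intro ω
        apply Finset.card_eq_zero.2
        rw [Finset.filter_eq_empty_iff]
        intro p hp
        simp only [Finset.mem_product, Finset.mem_range] at hp
        rintro ⟨hlt, -⟩
        omega
      have hzero :
          E0 0 (fun ω => Real.exp (-β * J 0 ω) * (if B * 0 < (J 0 ω : ℝ) then 1 else 0)) = 0 := by
        unfold E0
        rw [Finset.sum_eq_zero]
        · simp
        · intro ω _
          rw [hJ0 ω, if_neg (by norm_num), mul_zero]
      simp only [Nat.cast_zero]
      rw [hzero]
      exact hRHSpos 0
    · calc E0 n (fun ω => Real.exp (-β * J n ω) * (if B * n < (J n ω : ℝ) then 1 else 0))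
          ≤ (4 : ℝ) ^ n * Real.exp (-(β * (B * n))) / 4 ^ n := hLHSle n
        _ < ((SAW n).card : ℝ) / 4 ^ n := by gcongr; exact hkey n hn
        _ = _ := (hRHS n).symm
  refine ⟨hmain, ?_⟩
  set ε : ℝ := β * B - (Real.log 4 - ν₀) with hε
  have hεpos : 0 < ε := by simp only [hε]; linarith
  have hratio : ∀ n : ℕ, n ≠ 0 →
      E0 n (fun ω => Real.exp (-β * J n ω) * (if B * n < (J n ω : ℝ) then 1 else 0))
        ≤ Real.exp (-(ε * n)) *
          E0 n (fun ω => Real.exp (-β * J n ω) * (if J n ω = 0 then 1 else 0)) := by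
    intro n hn
    rw [hRHS]
    calc E0 n (fun ω => Real.exp (-β * J n ω) * (if B * n < (J n ω : ℝ) then 1 else 0))
        ≤ (4 : ℝ) ^ n * Real.exp (-(β * (B * n))) / 4 ^ n := hLHSle n
      _ = Real.exp (-(β * (B * n))) := by
          rw [mul_comm, mul_div_assoc, div_self (by positivity), mul_one]
      _ = Real.exp (-(ε * n)) * (Real.exp ((n : ℝ) * ν₀) / 4 ^ n) := by
          rw [h4exp, ← Real.exp_sub, ← Real.exp_add]
          congr 1
          simp only [hε]
          ring
      _ ≤ Real.exp (-(ε * n)) * (((SAW n).card : ℝ) / 4 ^ n) := by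
          apply mul_le_mul_of_nonneg_left _ (Real.exp_nonneg _)
          apply div_le_div_of_nonneg_right _ (by positivity)
          rw [← Real.exp_log (hcardpos n)]
          exact Real.exp_le_exp.2 (hge n hn)
  rw [Asymptotics.isLittleO_iff]
  intro c hc
  have htend : Filter.Tendsto (fun n : ℕ => Real.exp (-(ε * n))) Filter.atTop (nhds 0) := by
    have h1 : Filter.Tendsto (fun n : ℕ => (Real.exp (-ε)) ^ n) Filter.atTop (nhds 0) :=
      tendsto_pow_atTop_nhds_zero_of_lt_one (Real.exp_nonneg _)
        (Real.exp_lt_one_iff.2 (by linarith))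
    refine h1.congr fun n => ?_
    rw [← Real.exp_nat_mul]
    congr 1
    ring
  filter_upwards [htend.eventually (gt_mem_nhds hc), Filter.eventually_ne_atTop 0] with n h1 h2
  rw [Real.norm_eq_abs, Real.norm_eq_abs, abs_of_nonneg (hLHSnonneg n),
    abs_of_nonneg (le_of_lt (hRHSpos n))]
  calc E0 n (fun ω => Real.exp (-β * J n ω) * (if B * n < (J n ω : ℝ) then 1 else 0))
      ≤ Real.exp (-(ε * n)) *
        E0 n (fun ω => Real.exp (-β * J n ω) * (if J n ω = 0 then 1 else 0)) := hratio n h2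
    _ ≤ c * E0 n (fun ω => Real.exp (-β * J n ω) * (if J n ω = 0 then 1 else 0)) :=
        mul_le_mul_of_nonneg_right (le_of_lt h1) (le_of_lt (hRHSpos n))
end
end

section
/- The expected self-intersection local time of the planar symmetric simple random walk satisfies E_0[J_n] = π^{−1} n ln n + O(n); that is, there is a constant C < ∞ such that |E_0[J_n] − n ln n / π| ≤ C n for all n ≥ 2, and in particular E_0[J_n]/(n ln n) → 1/π as n → ∞. -/
open Filter Real Finset
open Topology

noncomputable section

lemma window_sum (n : ℕ) (ω : Fin n → Fin 4) {i j : ℕ} (hij : i ≤ j) :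
    pos n ω j - pos n ω i = ∑ t : Fin n, if i ≤ (t:ℕ) ∧ (t:ℕ) < j then dir (ω t) else 0 := by
  unfold pos
  rw [← Finset.sum_sub_distrib]
  refine Finset.sum_congr rfl fun t _ => ?_
  rcases lt_or_ge (t:ℕ) i with h1 | h1
  · have h2 : (t:ℕ) < j := lt_of_lt_of_le h1 hij
    simp [h1, h2, Nat.not_le.mpr h1]
  · rcases lt_or_ge (t:ℕ) j with h2 | h2
    · simp [h2, Nat.not_lt.mpr h1, h1]
    · simp [Nat.not_lt.mpr h1, Nat.not_lt.mpr h2]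

lemma pos_eq_iff (n : ℕ) (ω : Fin n → Fin 4) {i j : ℕ} (hij : i ≤ j) :
    (pos n ω i = pos n ω j) ↔
      (∑ t : Fin n, if i ≤ (t:ℕ) ∧ (t:ℕ) < j then dir (ω t) else 0) = 0 := by
  rw [← window_sum n ω hij, sub_eq_zero, eq_comm]

def Rcount (m : ℕ) : ℕ :=
  (Finset.univ.filter (fun σ : Fin m → Fin 4 => ∑ t, dir (σ t) = 0)).card

def winFun (n i j : ℕ) (hij : i ≤ j) (hjn : j ≤ n) : Fin (j - i) ⊕ Fin (n - (j - i)) → Fin n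
  | Sum.inl s => ⟨i + s, by omega⟩
  | Sum.inr s => if (s:ℕ) < i then ⟨s, by omega⟩ else ⟨(s:ℕ) + (j - i), by omega⟩

lemma winFun_inl_val (n i j : ℕ) (hij : i ≤ j) (hjn : j ≤ n) (s : Fin (j - i)) :
    ((winFun n i j hij hjn (Sum.inl s)) : ℕ) = i + s := rfl

lemma winFun_inr_val (n i j : ℕ) (hij : i ≤ j) (hjn : j ≤ n) (s : Fin (n - (j - i))) :
    ((winFun n i j hij hjn (Sum.inr s)) : ℕ)
      = if (s:ℕ) < i then (s:ℕ) else (s:ℕ) + (j - i) := by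
  have h : winFun n i j hij hjn (Sum.inr s)
      = if (s:ℕ) < i then (⟨(s:ℕ), by omega⟩ : Fin n)
        else (⟨(s:ℕ) + (j - i), by omega⟩ : Fin n) := rfl
  rw [h]
  split_ifs <;> rfl

lemma winFun_inj (n i j : ℕ) (hij : i ≤ j) (hjn : j ≤ n) :
    Function.Injective (winFun n i j hij hjn) := by
  rintro (s1 | s1) (s2 | s2) h <;>
    have hv := congrArg (fun t : Fin n => (t : ℕ)) h <;>
    simp only [winFun_inl_val, winFun_inr_val] at hv
  · have := s1.isLt; have := s2.isLt
    simp only [Sum.inl.injEq, Fin.ext_iff]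
    omega
  · exfalso; have := s1.isLt; have := s2.isLt; split_ifs at hv <;> omega
  · exfalso; have := s1.isLt; have := s2.isLt; split_ifs at hv <;> omega
  · have := s1.isLt; have := s2.isLt
    simp only [Sum.inr.injEq, Fin.ext_iff]
    split_ifs at hv <;> omega

def winEquiv (n i j : ℕ) (hij : i ≤ j) (hjn : j ≤ n) :
    Fin (j - i) ⊕ Fin (n - (j - i)) ≃ Fin n :=
  Equiv.ofBijective _ ((Fintype.bijective_iff_injective_and_card (winFun n i j hij hjn)).mpr
    ⟨winFun_inj n i j hij hjn, by simp [Fintype.card_sum]; omega⟩)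

lemma winEquiv_inl_val (n i j : ℕ) (hij : i ≤ j) (hjn : j ≤ n) (s : Fin (j - i)) :
    ((winEquiv n i j hij hjn (Sum.inl s) : Fin n) : ℕ) = i + s := rfl

lemma winEquiv_inr_not (n i j : ℕ) (hij : i ≤ j) (hjn : j ≤ n) (s : Fin (n - (j - i))) :
    ¬ (i ≤ ((winEquiv n i j hij hjn (Sum.inr s) : Fin n) : ℕ) ∧
       ((winEquiv n i j hij hjn (Sum.inr s) : Fin n) : ℕ) < j) := by
  have hs := s.isLt
  show ¬ (i ≤ ((winFun n i j hij hjn (Sum.inr s)) : ℕ) ∧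
      ((winFun n i j hij hjn (Sum.inr s)) : ℕ) < j)
  rw [winFun_inr_val]
  split_ifs <;> omega

lemma card_filter_equiv {α β : Type*} [Fintype α] [Fintype β] (e : α ≃ β)
    (p : α → Prop) (q : β → Prop) [DecidablePred p] [DecidablePred q]
    (h : ∀ a, p a ↔ q (e a)) :
    (univ.filter p).card = (univ.filter q).card := by
  rw [← Fintype.card_subtype, ← Fintype.card_subtype]
  exact Fintype.card_congr (e.subtypeEquiv h)

lemma card_window (n i j : ℕ) (hij : i ≤ j) (hjn : j ≤ n) :
    (Finset.univ.filter (fun ω : Fin n → Fin 4 =>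
       (∑ t : Fin n, if i ≤ (t:ℕ) ∧ (t:ℕ) < j then dir (ω t) else 0) = 0)).card
      = Rcount (j - i) * 4 ^ (n - (j - i)) := by
  set m := j - i with hm
  have hmn : m ≤ n := by omega
  set e := winEquiv n i j hij hjn with he
  have hval1 : ∀ s : Fin m, ((e (Sum.inl s)) : ℕ) = i + s :=
    fun s => winEquiv_inl_val n i j hij hjn s
  have hval2 : ∀ s : Fin (n - m), ¬ (i ≤ ((e (Sum.inr s)) : ℕ) ∧ ((e (Sum.inr s)) : ℕ) < j) :=
    fun s => winEquiv_inr_not n i j hij hjn s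
  set E : (Fin n → Fin 4) ≃ (Fin m → Fin 4) × (Fin (n - m) → Fin 4) :=
    (Equiv.arrowCongr e (Equiv.refl (Fin 4))).symm.trans
      (Equiv.sumArrowEquivProdArrow _ _ _) with hE
  have hsum : ∀ ω : Fin n → Fin 4,
      (∑ t : Fin n, if i ≤ (t:ℕ) ∧ (t:ℕ) < j then dir (ω t) else 0)
        = ∑ s : Fin m, dir ((E ω).1 s) := by
    intro ω
    rw [← Equiv.sum_comp e (fun t => if i ≤ (t:ℕ) ∧ (t:ℕ) < j then dir (ω t) else 0),
      Fintype.sum_sum_type]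
    have h2 : ∀ s : Fin (n - m),
        (if i ≤ ((e (Sum.inr s)):ℕ) ∧ ((e (Sum.inr s)):ℕ) < j then dir (ω (e (Sum.inr s))) else 0) = 0 :=
      fun s => if_neg (hval2 s)
    rw [Finset.sum_congr rfl (fun s _ => h2 s), Finset.sum_const_zero, add_zero]
    refine Finset.sum_congr rfl fun s _ => ?_
    rw [if_pos (by rw [hval1]; omega)]
    rfl
  rw [card_filter_equiv E _ (fun p => (∑ s : Fin m, dir (p.1 s)) = 0)
    (fun ω => by rw [hsum ω])]
  have hset : (univ.filter (fun p : (Fin m → Fin 4) × (Fin (n - m) → Fin 4) =>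
      (∑ s : Fin m, dir (p.1 s)) = 0))
      = (univ.filter (fun σ : Fin m → Fin 4 => (∑ s, dir (σ s)) = 0)) ×ˢ univ := by
    ext p
    simp [Finset.mem_product]
  rw [hset, Finset.card_product, Rcount]
  congr 1
  simp [Fintype.card_fun]

def e4 : Fin 4 ≃ Bool × Bool where
  toFun d := match d with
    | 0 => (true, true)
    | 1 => (false, false)
    | 2 => (true, false)
    | 3 => (false, true)
  invFun p := match p with
    | (true, true) => 0
    | (false, false) => 1
    | (true, false) => 2
    | (false, true) => 3
  left_inv := by decide
  right_inv := by decide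

def sgn (b : Bool) : ℤ := if b then 1 else -1

lemma dir_add (d : Fin 4) : (dir d).1 + (dir d).2 = sgn (e4 d).1 := by fin_cases d <;> rfl

lemma dir_sub (d : Fin 4) : (dir d).1 - (dir d).2 = sgn (e4 d).2 := by fin_cases d <;> rfl

def Bcount (m : ℕ) : ℕ :=
  (Finset.univ.filter (fun f : Fin m → Bool => (∑ t, sgn (f t)) = 0)).card

lemma Rcount_eq (m : ℕ) : Rcount m = Bcount m ^ 2 := by
  classical
  set Em : (Fin m → Fin 4) ≃ (Fin m → Bool) × (Fin m → Bool) :=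
    (Equiv.arrowCongr (Equiv.refl (Fin m)) e4).trans (Equiv.arrowProdEquivProdArrow _ _ _)
    with hEm
  have hiff : ∀ σ : Fin m → Fin 4,
      (∑ t, dir (σ t)) = 0 ↔
        ((∑ t, sgn ((Em σ).1 t)) = 0 ∧ (∑ t, sgn ((Em σ).2 t)) = 0) := by
    intro σ
    have h1 : (Em σ).1 = fun t => (e4 (σ t)).1 := rfl
    have h2 : (Em σ).2 = fun t => (e4 (σ t)).2 := rfl
    rw [h1, h2]
    have hfst : (∑ t, dir (σ t)).1 = ∑ t, (dir (σ t)).1 := by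
      exact Prod.fst_sum
    have hsnd : (∑ t, dir (σ t)).2 = ∑ t, (dir (σ t)).2 := by
      exact Prod.snd_sum
    constructor
    · intro h
      have hf : (∑ t, (dir (σ t)).1) = 0 := by rw [← hfst, h]; rfl
      have hs : (∑ t, (dir (σ t)).2) = 0 := by rw [← hsnd, h]; rfl
      constructor
      · rw [← Finset.sum_congr rfl (fun t _ => dir_add (σ t)), Finset.sum_add_distrib, hf, hs]
        norm_num
      · rw [← Finset.sum_congr rfl (fun t _ => dir_sub (σ t)), Finset.sum_sub_distrib, hf, hs]
        norm_num
    · rintro ⟨ha, hb⟩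
      rw [← Finset.sum_congr rfl (fun t _ => dir_add (σ t)), Finset.sum_add_distrib] at ha
      rw [← Finset.sum_congr rfl (fun t _ => dir_sub (σ t)), Finset.sum_sub_distrib] at hb
      have : (∑ t, dir (σ t)) = (∑ t, (dir (σ t)).1, ∑ t, (dir (σ t)).2) := by
        apply Prod.ext <;> simp [hfst, hsnd]
      rw [this, Prod.mk_eq_zero]
      omega
  rw [Rcount, card_filter_equiv Em _
    (fun p => (∑ t, sgn (p.1 t)) = 0 ∧ (∑ t, sgn (p.2 t)) = 0) hiff]
  have hset : (univ.filter (fun p : (Fin m → Bool) × (Fin m → Bool) =>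
      (∑ t, sgn (p.1 t)) = 0 ∧ (∑ t, sgn (p.2 t)) = 0))
      = (univ.filter (fun f : Fin m → Bool => (∑ t, sgn (f t)) = 0)) ×ˢ
        (univ.filter (fun f : Fin m → Bool => (∑ t, sgn (f t)) = 0)) := by
    ext p
    simp [Finset.mem_product]
  rw [hset, Finset.card_product, Bcount, sq]

lemma sum_sgn (m : ℕ) (f : Fin m → Bool) :
    (∑ t, sgn (f t)) = 2 * ((univ.filter (fun t => f t = true)).card : ℤ) - m := by
  classical
  rw [← Finset.sum_filter_add_sum_filter_not univ (fun t => f t = true)]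
  have h1 : ∀ t ∈ univ.filter (fun t => f t = true), sgn (f t) = 1 := by
    intro t ht
    simp only [Finset.mem_filter] at ht
    simp [sgn, ht.2]
  have h2 : ∀ t ∈ univ.filter (fun t => ¬ f t = true), sgn (f t) = -1 := by
    intro t ht
    simp only [Finset.mem_filter] at ht
    simp [sgn, ht.2]
  rw [Finset.sum_congr rfl h1, Finset.sum_congr rfl h2, Finset.sum_const, Finset.sum_const]
  have hc := Finset.card_filter_add_card_filter_not (s := (univ : Finset (Fin m)))
    (p := fun t => f t = true)
  simp only [Finset.card_univ, Fintype.card_fin] at hc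
  have : (univ.filter (fun t => ¬ f t = true)).card = m - (univ.filter (fun t => f t = true)).card := by
    omega
  rw [this]
  simp only [smul_eq_mul, nsmul_eq_mul, mul_one, mul_neg_one]
  have hle : (univ.filter (fun t => f t = true)).card ≤ m := by
    calc _ ≤ (univ : Finset (Fin m)).card := Finset.card_filter_le _ _
    _ = m := by simp
  omega

lemma Bcount_even (k : ℕ) : Bcount (2 * k) = Nat.centralBinom k := by
  classical
  have hset : (univ.filter (fun f : Fin (2*k) → Bool => (∑ t, sgn (f t)) = 0))
      = (univ.filter (fun f : Fin (2*k) → Bool =>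
          (univ.filter (fun t => f t = true)).card = k)) := by
    ext f
    simp only [Finset.mem_filter, Finset.mem_univ, true_and, sum_sgn]
    constructor
    · intro h; omega
    · intro h; rw [h]; push_cast; ring
  rw [Bcount, hset]
  have hpc := Finset.card_powersetCard k (univ : Finset (Fin (2*k)))
  simp only [Finset.card_univ, Fintype.card_fin] at hpc
  rw [Nat.centralBinom, ← hpc]
  refine Finset.card_bij' (fun f _ => univ.filter (fun t => f t = true))
      (fun s _ => fun t => decide (t ∈ s)) ?_ ?_ ?_ ?_
  · intro f hf
    simp only [Finset.mem_filter, Finset.mem_univ, true_and] at hf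
    rw [Finset.mem_powersetCard]
    exact ⟨Finset.subset_univ _, hf⟩
  · intro s hs
    rw [Finset.mem_powersetCard] at hs
    simp only [Finset.mem_filter, Finset.mem_univ, true_and]
    have : filter (fun t => decide (t ∈ s) = true) univ = s := by
      ext t; simp
    rw [this, hs.2]
  · intro f hf
    funext t
    simp
  · intro s hs
    ext t
    simp

lemma Bcount_odd (m : ℕ) (hm : m % 2 = 1) : Bcount m = 0 := by
  rw [Bcount, Finset.card_eq_zero, Finset.filter_eq_empty_iff]
  intro f _
  rw [sum_sgn]
  have : (univ.filter (fun t => f t = true)).card ≤ m := by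
    calc _ ≤ (univ : Finset (Fin m)).card := Finset.card_filter_le _ _
    _ = m := by simp
  omega

lemma sum_J (n : ℕ) :
    (∑ ω : Fin n → Fin 4, (J n ω : ℝ))
      = ∑ p ∈ (range (n+1) ×ˢ range (n+1)),
          (if p.1 < p.2 then (Rcount (p.2 - p.1) : ℝ) * 4 ^ (n - (p.2 - p.1)) else 0) := by
  classical
  have h1 : ∀ ω, (J n ω : ℝ) = ∑ p ∈ (range (n+1) ×ˢ range (n+1)),
      (if p.1 < p.2 ∧ pos n ω p.1 = pos n ω p.2 then (1:ℝ) else 0) := by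
    intro ω
    rw [J, Finset.card_filter]
    push_cast
    exact Finset.sum_congr rfl (fun p _ => by split_ifs <;> simp)
  rw [Finset.sum_congr rfl (fun ω _ => h1 ω), Finset.sum_comm]
  refine Finset.sum_congr rfl fun p hp => ?_
  rcases p with ⟨i, j⟩
  simp only [Finset.mem_product, Finset.mem_range] at hp
  by_cases hij : i < j
  · rw [if_pos hij]
    have h2 : ∀ ω : Fin n → Fin 4, (if i < j ∧ pos n ω i = pos n ω j then (1:ℝ) else 0)
        = if (∑ t : Fin n, if i ≤ (t:ℕ) ∧ (t:ℕ) < j then dir (ω t) else 0) = 0 then 1 else 0 := by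
      intro ω
      by_cases hc : (∑ t : Fin n, if i ≤ (t:ℕ) ∧ (t:ℕ) < j then dir (ω t) else 0) = 0
      · rw [if_pos hc, if_pos ⟨hij, (pos_eq_iff n ω hij.le).mpr hc⟩]
      · rw [if_neg hc, if_neg (fun h => hc ((pos_eq_iff n ω hij.le).mp h.2))]
    rw [Finset.sum_congr rfl (fun ω _ => h2 ω), Finset.sum_boole,
      card_window n i j hij.le (by omega)]
    push_cast
    ring
  · rw [if_neg hij]
    exact Finset.sum_eq_zero fun ω _ => if_neg (by tauto)

lemma innerSum' (n j : ℕ) (hj : j ≤ n) (g : ℕ → ℝ) :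
    (∑ i ∈ range (n+1), if i < j then g (j - i) else 0) = ∑ m ∈ range j, g (m+1) := by
  rw [← Finset.sum_filter]
  have hf : (range (n+1)).filter (· < j) = range j := by
    ext x; simp only [Finset.mem_filter, Finset.mem_range]; omega
  rw [hf, ← Finset.sum_range_reflect (fun i => g (j - i)) j]
  refine Finset.sum_congr rfl fun i hi => ?_
  rw [Finset.mem_range] at hi
  congr 1
  omega

lemma tri_sum (n : ℕ) (h : ℕ → ℝ) :
    (∑ j ∈ range (n+1), ∑ m ∈ range j, h m) = ∑ i ∈ range n, ((n - i : ℕ) : ℝ) * h i := by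
  induction n with
  | zero => simp
  | succ n ih =>
    rw [Finset.sum_range_succ, ih, Finset.sum_range_succ (fun i => (((n+1) - i : ℕ) : ℝ) * h i)]
    have hco : ∀ i ∈ range n, (((n+1) - i : ℕ) : ℝ) * h i = ((n - i : ℕ) : ℝ) * h i + h i := by
      intro i hi
      rw [Finset.mem_range] at hi
      rw [show (n+1-i : ℕ) = (n-i : ℕ) + 1 by omega]
      push_cast
      ring
    rw [Finset.sum_congr rfl hco, Finset.sum_add_distrib,
      show ((n+1-n : ℕ) : ℝ) = 1 by rw [show (n+1-n:ℕ) = 1 by omega]; norm_num,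
      Finset.sum_range_succ h]
    ring

lemma even_vanish (c : ℕ → ℝ) (hc : ∀ i, i % 2 = 0 → c i = 0) (n : ℕ) :
    ∑ i ∈ range n, c i = ∑ k ∈ range (n / 2), c (2*k+1) := by
  induction n with
  | zero => simp
  | succ n ih =>
    rw [Finset.sum_range_succ, ih]
    rcases Nat.even_or_odd n with he | ho
    · have h0 : n % 2 = 0 := Nat.even_iff.mp he
      rw [hc n h0, add_zero, show (n+1)/2 = n/2 by omega]
    · have h1 : n % 2 = 1 := Nat.odd_iff.mp ho
      rw [show (n+1)/2 = n/2 + 1 by omega, Finset.sum_range_succ,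
        show 2*(n/2)+1 = n by omega]

lemma E0J (n : ℕ) : E0 n (fun ω => (J n ω : ℝ))
    = ∑ k ∈ range (n / 2),
        ((n - (2*k+1) : ℕ) : ℝ) * ((Nat.centralBinom (k+1) : ℝ) / 4 ^ (k+1)) ^ 2 := by
  classical
  set g : ℕ → ℝ := fun m => (Rcount m : ℝ) * 4 ^ (n - m) / 4 ^ n with hg
  rw [E0, sum_J, Finset.sum_div]
  have step1 : ∀ p ∈ (range (n+1) ×ˢ range (n+1)),
      (if p.1 < p.2 then (Rcount (p.2 - p.1) : ℝ) * 4 ^ (n - (p.2 - p.1)) else 0) / 4 ^ n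
        = if p.1 < p.2 then g (p.2 - p.1) else 0 := by
    intro p _
    split_ifs <;> simp [hg]
  rw [Finset.sum_congr rfl step1, Finset.sum_product, Finset.sum_comm]
  have step2 : ∀ j ∈ range (n+1),
      (∑ i ∈ range (n+1), if i < j then g (j - i) else 0) = ∑ m ∈ range j, g (m+1) := by
    intro j hj
    rw [Finset.mem_range] at hj
    exact innerSum' n j (by omega) g
  rw [Finset.sum_congr rfl step2, tri_sum n (fun m => g (m+1))]
  have hvan : ∀ i, i % 2 = 0 → ((n - i : ℕ) : ℝ) * g (i+1) = 0 := by
    intro i hi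
    have : Rcount (i+1) = 0 := by
      rw [Rcount_eq, Bcount_odd (i+1) (by omega)]
      norm_num
    simp [hg, this]
  rw [even_vanish _ hvan n]
  refine Finset.sum_congr rfl fun k hk => ?_
  rw [Finset.mem_range] at hk
  congr 1
  have hm : 2*k+1+1 = 2*(k+1) := by ring
  rw [hg]
  simp only []
  rw [hm, Rcount_eq, Bcount_even (k+1)]
  have hmn : 2*(k+1) ≤ n := by omega
  rw [div_pow, div_eq_div_iff (by positivity) (by positivity)]
  rw [show (4:ℝ)^n = 4^(n-2*(k+1)) * 4^(2*(k+1)) by rw [← pow_add]; congr 1; omega]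
  rw [show ((4:ℝ)^(k+1))^2 = 4^(2*(k+1)) by rw [← pow_mul]; congr 1; ring]
  push_cast
  ring


noncomputable def aa (k : ℕ) : ℝ := (Nat.centralBinom k : ℝ) / 4 ^ k

lemma aa_pos (k : ℕ) : 0 < aa k := by
  unfold aa
  have := Nat.centralBinom_pos k
  positivity

lemma aa_succ (k : ℕ) : aa (k + 1) = aa k * (2 * k + 1) / (2 * k + 2) := by
  have h := Nat.succ_mul_centralBinom_succ k
  have h' : ((k : ℝ) + 1) * (Nat.centralBinom (k + 1) : ℝ)
      = 2 * (2 * k + 1) * (Nat.centralBinom k : ℝ) := by exact_mod_cast h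
  unfold aa
  have h4 : (4 : ℝ) ^ (k + 1) = 4 ^ k * 4 := by ring
  rw [h4]
  field_simp
  nlinarith [h', pow_pos (show (0:ℝ) < 4 by norm_num) k]

lemma factorial_id (k : ℕ) :
    ((2 * k).factorial : ℝ) = (Nat.centralBinom k : ℝ) * k.factorial * k.factorial := by
  have := Nat.choose_mul_factorial_mul_factorial (show k ≤ 2 * k by omega)
  rw [show 2 * k - k = k by omega] at this
  exact_mod_cast this.symm

lemma stirling_id (k : ℕ) (hk : 1 ≤ k) :
    Stirling.stirlingSeq (2 * k) = aa k * Real.sqrt k * Stirling.stirlingSeq k ^ 2 := by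
  have hkR : (0:ℝ) < k := by exact_mod_cast hk
  have hsq : Real.sqrt (2 * k) ^ 2 = 2 * k := Real.sq_sqrt (by positivity)
  have h4k : Real.sqrt (2 * (2 * k) : ℝ) = 2 * Real.sqrt k := by
    push_cast
    rw [show (2 : ℝ) * (2 * k) = 4 * k by ring, show (4 : ℝ) * k = 2^2 * k by norm_num,
      Real.sqrt_mul (by positivity), Real.sqrt_sq (by norm_num)]
  unfold Stirling.stirlingSeq
  push_cast
  rw [factorial_id, h4k]
  have hpow : ((2 * k : ℝ)) ^ (2 * k) = 4 ^ k * (k:ℝ) ^ (2*k) := by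
    rw [mul_pow, pow_mul]; norm_num
  have hdpow : ((2 * (k:ℝ)) / Real.exp 1) ^ (2 * k) = 4 ^ k * ((k:ℝ) / Real.exp 1) ^ (2 * k) := by
    rw [div_pow, div_pow, hpow]; ring
  push_cast at hdpow
  rw [hdpow]
  unfold aa
  have hs2k : (0:ℝ) < Real.sqrt (2 * k) := Real.sqrt_pos.mpr (by positivity)
  have hsk : (0:ℝ) < Real.sqrt k := Real.sqrt_pos.mpr hkR
  have he : (0:ℝ) < Real.exp 1 := Real.exp_pos 1
  have hkfac : (0:ℝ) < k.factorial := by exact_mod_cast k.factorial_pos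
  have hke : (0:ℝ) < ((k:ℝ) / Real.exp 1) ^ k := by positivity
  have he2 : Real.exp (2 * (k:ℝ)) = Real.exp (k:ℝ) ^ 2 := by
    rw [two_mul, Real.exp_add, sq]
  have hs2 : Real.sqrt 2 ^ 2 = 2 := Real.sq_sqrt (by norm_num)
  have hsk2 : Real.sqrt (k:ℝ) ^ 2 = (k:ℝ) := Real.sq_sqrt (le_of_lt hkR)
  field_simp
  rw [hsq, hsk2]
  ring

noncomputable def bb (k : ℕ) : ℝ := k * aa k ^ 2
noncomputable def cc (k : ℕ) : ℝ := ((k : ℝ) + 1/2) * aa k ^ 2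

lemma bb_mono : Monotone bb := monotone_nat_of_le_succ fun k => by
  unfold bb
  rw [aa_succ]
  have h2 : (0:ℝ) < (2*(k:ℝ)+2)^2 := by positivity
  push_cast
  rw [div_pow, mul_pow, mul_div_assoc', le_div_iff₀ h2]
  nlinarith [sq_nonneg (aa k)]

lemma cc_anti : Antitone cc := antitone_nat_of_succ_le fun k => by
  unfold cc
  rw [aa_succ]
  have h2 : (0:ℝ) < (2*(k:ℝ)+2)^2 := by positivity
  push_cast
  rw [div_pow, mul_pow, mul_div_assoc', div_le_iff₀ h2]
  nlinarith [sq_nonneg (aa k)]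

lemma tendsto_bb : Tendsto bb atTop (nhds π⁻¹) := by
  have hs := Stirling.tendsto_stirlingSeq_sqrt_pi
  have h2k : Tendsto (fun k : ℕ => 2 * k) atTop atTop :=
    StrictMono.tendsto_atTop (fun a b h => by omega)
  have hs2 : Tendsto (fun k => Stirling.stirlingSeq (2 * k)) atTop (𝓝 (Real.sqrt π)) :=
    hs.comp h2k
  have hpi : (Real.sqrt π) ^ 2 = π := Real.sq_sqrt Real.pi_pos.le
  have hne : (Real.sqrt π) ^ 2 ≠ 0 := by rw [hpi]; exact Real.pi_ne_zero
  have hr : Tendsto (fun k => Stirling.stirlingSeq (2 * k) / Stirling.stirlingSeq k ^ 2)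
      atTop (𝓝 (Real.sqrt π / Real.sqrt π ^ 2)) := hs2.div (hs.pow 2) hne
  have hr2 : Tendsto (fun k => (Stirling.stirlingSeq (2 * k) / Stirling.stirlingSeq k ^ 2) ^ 2)
      atTop (𝓝 ((Real.sqrt π / Real.sqrt π ^ 2) ^ 2)) := hr.pow 2
  have hval : (Real.sqrt π / Real.sqrt π ^ 2) ^ 2 = π⁻¹ := by
    rw [div_pow, hpi, ← hpi]; field_simp
  rw [hval] at hr2
  refine hr2.congr' ?_
  filter_upwards [eventually_ge_atTop 1] with k hk
  have hpos : (0:ℝ) < Stirling.stirlingSeq k := by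
    obtain ⟨m, rfl⟩ := Nat.exists_eq_add_of_le hk
    simpa [Nat.add_comm] using Stirling.stirlingSeq'_pos m
  rw [stirling_id k hk]
  unfold bb
  have hsk : Real.sqrt (k:ℝ) ^ 2 = (k:ℝ) := Real.sq_sqrt (by positivity)
  field_simp
  nlinarith [hsk, sq_nonneg (aa k), sq_nonneg (Real.sqrt (k:ℝ))]

lemma bb_le (k : ℕ) : bb k ≤ π⁻¹ := bb_mono.ge_of_tendsto tendsto_bb k

lemma tendsto_aasq : Tendsto (fun k => aa k ^ 2) atTop (𝓝 0) := by
  have h1 : Tendsto (fun k : ℕ => π⁻¹ * (1 / (k:ℝ))) atTop (𝓝 (π⁻¹ * 0)) :=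
    tendsto_const_nhds.mul tendsto_one_div_atTop_nhds_zero_nat
  rw [mul_zero] at h1
  apply squeeze_zero_norm' _ h1
  filter_upwards [eventually_ge_atTop 1] with k hk
  have hk0 : (0:ℝ) < k := by exact_mod_cast hk
  have := bb_le k
  unfold bb at this
  rw [Real.norm_eq_abs, abs_of_nonneg (sq_nonneg _), mul_one_div, le_div_iff₀ hk0]
  linarith

lemma cc_ge (k : ℕ) : π⁻¹ ≤ cc k := by
  refine cc_anti.le_of_tendsto ?_ k
  have : Tendsto (fun k => bb k + aa k ^ 2 * (1/2)) atTop (𝓝 (π⁻¹ + 0 * (1/2))) :=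
    tendsto_bb.add (tendsto_aasq.mul tendsto_const_nhds)
  rw [zero_mul, add_zero] at this
  refine this.congr fun k => ?_
  unfold bb cc
  ring

lemma aa_err (k : ℕ) : |aa (k+1) ^ 2 - π⁻¹ * (1 / ((k:ℝ)+1))| ≤ π⁻¹ * (1 / ((k:ℝ)+1)^2) := by
  set K : ℝ := (k:ℝ) + 1 with hK
  have hK0 : (0:ℝ) < K := by positivity
  have hpi : (0:ℝ) < π⁻¹ := by positivity
  have hhigh := bb_le (k+1)
  have hlow := cc_ge (k+1)
  unfold bb at hhigh; unfold cc at hlow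
  push_cast at hhigh hlow
  rw [abs_le]
  constructor
  · rw [neg_le, neg_sub]
    have h2' : π⁻¹ / (K + 1/2) ≤ aa (k+1) ^ 2 := by
      rw [div_le_iff₀ (by positivity)]
      nlinarith
    have h2'' : π⁻¹ * (1/K) - π⁻¹ * (1/K^2) ≤ π⁻¹ / (K + 1/2) := by
      rw [mul_one_div, mul_one_div, div_sub_div _ _ hK0.ne' (by positivity),
        div_le_div_iff₀ (by positivity) (by positivity)]
      nlinarith
    linarith
  · have h1 : aa (k+1) ^ 2 ≤ π⁻¹ * (1/K) := by
      rw [mul_one_div, le_div_iff₀ hK0]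
      nlinarith
    have h0 : (0:ℝ) ≤ π⁻¹ * (1 / K ^ 2) := by positivity
    linarith


lemma E0J_aa (n : ℕ) : E0 n (fun ω => (J n ω : ℝ))
    = ∑ k ∈ Finset.range (n / 2), ((n - (2*k+1) : ℕ) : ℝ) * aa (k+1) ^ 2 := by
  rw [E0J]
  exact Finset.sum_congr rfl fun k _ => rfl

lemma sum_inv_sq (K : ℕ) : ∑ k ∈ Finset.range K, (1:ℝ)/((k:ℝ)+1)^2 ≤ 2 := by
  have main : ∀ K : ℕ, ∑ k ∈ Finset.range K, (1:ℝ)/((k:ℝ)+1)^2 ≤ 2 - 2/((K:ℝ)+1) := by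
    intro K
    induction K with
    | zero => norm_num
    | succ K ih =>
      rw [Finset.sum_range_succ]
      push_cast
      have hstep : (1:ℝ)/((K:ℝ)+1)^2 ≤ 2/((K:ℝ)+1) - 2/((K:ℝ)+1+1) := by
        rw [div_sub_div _ _ (by positivity) (by positivity),
          div_le_div_iff₀ (by positivity) (by positivity)]
        nlinarith [Nat.cast_nonneg (α := ℝ) K]
      push_cast at ih ⊢
      linarith
  have h := main K
  have h2 : (0:ℝ) < 2/((K:ℝ)+1) := by positivity
  linarith

lemma HK_eq (K : ℕ) : ∑ k ∈ Finset.range K, (1:ℝ)/((k:ℝ)+1) = ((harmonic K : ℚ) : ℝ) := by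
  rw [harmonic]
  push_cast
  exact Finset.sum_congr rfl fun k _ => by rw [one_div]

set_option maxHeartbeats 1000000 in
lemma main_bound (n : ℕ) (hn : 2 ≤ n) :
    |(∑ k ∈ Finset.range (n/2), ((n - (2*k+1) : ℕ) : ℝ) * aa (k+1) ^ 2)
      - (n:ℝ) * Real.log n / π| ≤ 5 * n := by
  set K := n / 2 with hK
  set N : ℝ := (n : ℝ) with hN
  have hN2 : (2:ℝ) ≤ N := by rw [hN]; exact_mod_cast hn
  have hK1 : 1 ≤ K := by omega
  have hKn : 2 * K ≤ n := by omega
  have hKR : (1:ℝ) ≤ (K:ℝ) := by exact_mod_cast hK1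
  have h2K : 2 * (K:ℝ) ≤ N := by rw [hN]; push_cast; exact_mod_cast hKn
  have hN2K : N ≤ 2 * (K:ℝ) + 2 := by
    have h : n ≤ 2 * K + 2 := by omega
    rw [hN]
    push_cast
    exact_mod_cast h
  have hπ : (0:ℝ) < π := Real.pi_pos
  have h2π : (2:ℝ) ≤ π := by linarith [Real.pi_gt_three]
  have hπinv0 : (0:ℝ) < π⁻¹ := by positivity
  have hπinv : π⁻¹ ≤ 1/2 := by
    rw [show (1:ℝ)/2 = 2⁻¹ by norm_num]
    exact inv_anti₀ (by norm_num) h2π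
  set HK : ℝ := ∑ k ∈ Finset.range K, (1:ℝ)/((k:ℝ)+1) with hHK
  have hw : ∀ k ∈ Finset.range K, ((n - (2*k+1) : ℕ) : ℝ) = N - (2*(k:ℝ)+1) := by
    intro k hk
    rw [Finset.mem_range] at hk
    have h1 : 2*k+1 ≤ n := by omega
    rw [Nat.cast_sub h1]
    push_cast
    ring
  have hw0 : ∀ k ∈ Finset.range K, (0:ℝ) ≤ ((n - (2*k+1) : ℕ) : ℝ) := fun k _ => Nat.cast_nonneg _
  have hwN : ∀ k ∈ Finset.range K, ((n - (2*k+1) : ℕ) : ℝ) ≤ N := by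
    intro k hk
    rw [hN]
    exact_mod_cast Nat.sub_le n (2*k+1)
  set T : ℝ := ∑ k ∈ Finset.range K, ((n - (2*k+1) : ℕ) : ℝ) * (π⁻¹ * (1/((k:ℝ)+1))) with hT
  have h1 : |(∑ k ∈ Finset.range K, ((n - (2*k+1) : ℕ) : ℝ) * aa (k+1) ^ 2) - T| ≤ N := by
    rw [hT, ← Finset.sum_sub_distrib]
    refine (Finset.abs_sum_le_sum_abs _ _).trans ?_
    have hterm : ∀ k ∈ Finset.range K,
        |((n - (2*k+1) : ℕ) : ℝ) * aa (k+1) ^ 2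
          - ((n - (2*k+1) : ℕ) : ℝ) * (π⁻¹ * (1/((k:ℝ)+1)))|
          ≤ N * (π⁻¹ * (1/((k:ℝ)+1)^2)) := by
      intro k hk
      rw [← mul_sub, abs_mul, abs_of_nonneg (hw0 k hk)]
      have herr := aa_err k
      calc _ ≤ N * |aa (k+1)^2 - π⁻¹ * (1/((k:ℝ)+1))| :=
          mul_le_mul_of_nonneg_right (hwN k hk) (abs_nonneg _)
      _ ≤ N * (π⁻¹ * (1/((k:ℝ)+1)^2)) := mul_le_mul_of_nonneg_left herr (by linarith)
    refine (Finset.sum_le_sum hterm).trans ?_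
    rw [← Finset.mul_sum, ← Finset.mul_sum]
    have hsum := sum_inv_sq K
    have hsumnn : (0:ℝ) ≤ ∑ k ∈ Finset.range K, 1/((k:ℝ)+1)^2 :=
      Finset.sum_nonneg fun k _ => by positivity
    calc N * (π⁻¹ * ∑ k ∈ Finset.range K, 1/((k:ℝ)+1)^2) ≤ N * (π⁻¹ * 2) := by
          apply mul_le_mul_of_nonneg_left _ (by linarith)
          exact mul_le_mul_of_nonneg_left hsum (le_of_lt hπinv0)
    _ ≤ N * 1 := by nlinarith
    _ = N := mul_one N
  have h2 : T = π⁻¹ * ((N+1) * HK - 2*(K:ℝ)) := by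
    rw [hT, hHK]
    have hper : ∀ k ∈ Finset.range K, ((n - (2*k+1) : ℕ) : ℝ) * (π⁻¹ * (1/((k:ℝ)+1)))
        = π⁻¹ * ((N+1) * (1/((k:ℝ)+1))) - π⁻¹ * 2 := by
      intro k hk
      rw [hw k hk]
      have hk0 : ((k:ℝ)+1) ≠ 0 := by positivity
      field_simp
      ring
    rw [Finset.sum_congr rfl hper, Finset.sum_sub_distrib, Finset.sum_const, Finset.card_range,
      ← Finset.mul_sum, ← Finset.mul_sum]
    push_cast
    ring
  have hHup : HK ≤ 1 + Real.log K := by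
    rw [hHK, HK_eq]
    exact harmonic_le_one_add_log K
  have hHlo : Real.log ((K:ℝ)+1) ≤ HK := by
    rw [hHK, HK_eq]
    have h := log_add_one_le_harmonic K
    push_cast at h ⊢
    exact h
  have hlogK : Real.log K ≤ Real.log N := by
    apply Real.log_le_log (by positivity)
    linarith
  have hlogN2 : Real.log N ≤ Real.log 2 + Real.log ((K:ℝ)+1) := by
    rw [← Real.log_mul (by norm_num) (by positivity)]
    apply Real.log_le_log (by linarith)
    linarith
  have hlog2 : Real.log 2 ≤ 1 := by
    have h := Real.log_two_lt_d9
    linarith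
  have hlogNN : Real.log N ≤ N := by
    have h := Real.log_le_sub_one_of_pos (show (0:ℝ) < N by linarith)
    linarith
  have hlogN0 : (0:ℝ) ≤ Real.log N := Real.log_nonneg (by linarith)
  have h3 : |(N+1) * HK - 2*(K:ℝ) - N * Real.log N| ≤ 4 * N := by
    rw [abs_le]
    constructor
    · have hlow : Real.log N - 1 ≤ HK := by linarith
      have hmul : (N+1) * (Real.log N - 1) ≤ (N+1) * HK :=
        mul_le_mul_of_nonneg_left hlow (by linarith)
      nlinarith
    · have hmul : (N+1) * HK ≤ (N+1) * (1 + Real.log N) :=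
        mul_le_mul_of_nonneg_left (by linarith) (by linarith)
      nlinarith
  have hsplit : (∑ k ∈ Finset.range K, ((n - (2*k+1) : ℕ) : ℝ) * aa (k+1) ^ 2)
        - N * Real.log N / π
      = ((∑ k ∈ Finset.range K, ((n - (2*k+1) : ℕ) : ℝ) * aa (k+1) ^ 2) - T)
        + π⁻¹ * ((N+1) * HK - 2*(K:ℝ) - N * Real.log N) := by
    rw [h2]
    field_simp
    ring
  rw [hsplit]
  calc _ ≤ |(∑ k ∈ Finset.range K, ((n - (2*k+1) : ℕ) : ℝ) * aa (k+1) ^ 2) - T|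
        + |π⁻¹ * ((N+1) * HK - 2*(K:ℝ) - N * Real.log N)| := abs_add_le _ _
  _ ≤ N + π⁻¹ * (4 * N) := by
      refine add_le_add h1 ?_
      rw [abs_mul, abs_of_pos hπinv0]
      exact mul_le_mul_of_nonneg_left h3 (le_of_lt hπinv0)
  _ ≤ N + (1/2) * (4 * N) := by nlinarith
  _ ≤ 5 * N := by linarith

/-- `E_0[J_n] = π^{−1} n ln n + O(n)`: there is `C < ∞` with
`|E_0[J_n] − n ln n / π| ≤ C n` for all `n ≥ 2`, and in particular
`E_0[J_n]/(n ln n) → 1/π`. -/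
theorem statement14 :
    ∃ C : ℝ,
      (∀ n : ℕ, 2 ≤ n →
        |E0 n (fun ω => (J n ω : ℝ)) - (n : ℝ) * Real.log n / Real.pi| ≤ C * n) ∧
      Filter.Tendsto
        (fun n : ℕ => E0 n (fun ω => (J n ω : ℝ)) / ((n : ℝ) * Real.log n))
        Filter.atTop (nhds (1 / Real.pi)) := by
  refine ⟨5, fun n hn => ?_, ?_⟩
  · rw [E0J_aa]
    exact main_bound n hn
  · have hlog : Tendsto (fun n : ℕ => Real.log n) atTop atTop :=
      Real.tendsto_log_atTop.comp tendsto_natCast_atTop_atTop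
    have h5 : Tendsto (fun n : ℕ => (5:ℝ) / Real.log n) atTop (nhds 0) :=
      Tendsto.div_atTop tendsto_const_nhds hlog
    rw [show (1:ℝ)/π = π⁻¹ by rw [one_div]]
    have key : Tendsto (fun n : ℕ =>
        E0 n (fun ω => (J n ω : ℝ)) / ((n : ℝ) * Real.log n) - π⁻¹) atTop (nhds 0) := by
      apply squeeze_zero_norm' _ h5
      filter_upwards [eventually_ge_atTop 2] with n hn
      have hN2 : (2:ℝ) ≤ (n:ℝ) := by exact_mod_cast hn
      have hlogpos : (0:ℝ) < Real.log n := Real.log_pos (by linarith)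
      have hnl : (0:ℝ) < (n:ℝ) * Real.log n := by positivity
      have hb : |E0 n (fun ω => (J n ω : ℝ)) - (n:ℝ) * Real.log n / π| ≤ 5 * n := by
        rw [E0J_aa]
        exact main_bound n hn
      have keyeq : E0 n (fun ω => (J n ω : ℝ)) / ((n:ℝ) * Real.log n) - π⁻¹
          = (E0 n (fun ω => (J n ω : ℝ)) - (n:ℝ) * Real.log n / π) / ((n:ℝ) * Real.log n) := by
        rw [eq_div_iff hnl.ne']
        field_simp
      rw [Real.norm_eq_abs, keyeq, abs_div, abs_of_pos hnl, div_le_iff₀ hnl]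
      calc |E0 n (fun ω => (J n ω : ℝ)) - (n:ℝ) * Real.log n / π| ≤ 5 * n := hb
      _ = 5 / Real.log n * ((n:ℝ) * Real.log n) := by
          field_simp
    have := key.add (tendsto_const_nhds (x := π⁻¹))
    simp only [zero_add] at this
    refine this.congr fun n => ?_
    ring
end
end
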